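/- arXiv:1305.0805 — 2 statements merged into one kernel-verified Lean document; each statement's English description precedes it below -/
import Mathlib

section
/- Let q = p^m with p prime, ω = exp(2πi/p), and tr : F_q → F_p the field trace. Let G be a k×n matrix over F_q of rank k, A ⊆ {1,…,n} with complement B, and suppose rank(G_B) = k. Let c : F_q^k → ℂ satisfy Σ_{x ∈ F_q^k} |c(x)|² = 1, and for a ∈ F_q^{|A|} define Φ_a(w) = q^{-|A|/2} Σ_{x ∈ F_q^k, x·G_B = w} c(x) ω^{-tr((x·G_A)·a^T)} for w ∈ F_q^{|B|}. Then Σ_{w ∈ F_q^{|B|}} |Φ_a(w)|² = q^{-|A|}; in particular the probability of every measurement outcome a is 1/q^{|A|}, independent of a and of the amplitudes c. -/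
/-!
Since `rank G_B = k`, the map `x ↦ x·G_B` is injective, so every sum defining `Φ_a(w)` has at
most one term. The phase `ω^{-tr(…)}` has modulus one, hence `|Φ_a(w)|² = q^{-|A|} |c(x)|²` for the
unique `x` with `x·G_B = w` (and `0` if there is none), and summing over `w` gives
`q^{-|A|} ∑ₓ |c(x)|² = q^{-|A|}`.
-/

open Finset

theorem Matrix.linearIndependent_row_of_rank_eq_card {R m n : Type*} [Field R] [Fintype m]
    [Fintype n] {M : Matrix m n R} (h : M.rank = Fintype.card m) : LinearIndependent R M.row := by
  rw [linearIndependent_iff_card_eq_finrank_span, Set.finrank, ← M.rank_eq_finrank_span_row, h]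

theorem Matrix.vecMul_injective_of_rank_eq_card {R m n : Type*} [Field R] [Fintype m]
    [Fintype n] {M : Matrix m n R} (h : M.rank = Fintype.card m) : Function.Injective M.vecMul :=
  Matrix.vecMul_injective_iff.mpr (linearIndependent_row_of_rank_eq_card h)

theorem norm_sum_sq_of_card_le_one {α E : Type*} [SeminormedAddCommGroup E] {s : Finset α}
    (hs : #s ≤ 1) (g : α → E) : ‖∑ x ∈ s, g x‖ ^ 2 = ∑ x ∈ s, ‖g x‖ ^ 2 := by
  rcases Nat.le_one_iff_eq_zero_or_eq_one.mp hs with h | h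
  · simp [Finset.card_eq_zero.mp h]
  · obtain ⟨x, rfl⟩ := Finset.card_eq_one.mp h
    simp

theorem sum_norm_sq_sum_fiber_of_injective {α β E : Type*} [Fintype α] [Fintype β]
    [DecidableEq β] [SeminormedAddCommGroup E] {f : α → β} (hf : Function.Injective f)
    (g : α → E) : ∑ w, ‖∑ x ∈ univ.filter (fun x => f x = w), g x‖ ^ 2 = ∑ x, ‖g x‖ ^ 2 := by
  have hfiber (w : β) : #(univ.filter (fun x => f x = w)) ≤ 1 :=
    Finset.card_le_one.mpr fun x hx y hy => hf ((mem_filter.mp hx).2.trans (mem_filter.mp hy).2.symm)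
  simp_rw [norm_sum_sq_of_card_le_one (hfiber _)]
  exact Finset.sum_fiberwise univ f fun x => ‖g x‖ ^ 2

theorem Complex.norm_exp_two_pi_I_div (p : ℕ) : ‖exp (2 * Real.pi * I / p)‖ = 1 := by
  have : 2 * Real.pi * I / p = ((2 * Real.pi / p : ℝ) : ℂ) * I := by push_cast; ring
  rw [this, norm_exp_ofReal_mul_I]

theorem norm_inv_sqrt_pow_sq {t : ℝ} (ht : 0 ≤ t) (N : ℕ) :
    ‖((Real.sqrt t : ℂ))⁻¹ ^ N‖ ^ 2 = t⁻¹ ^ N := by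
  rw [norm_pow, norm_inv, Complex.norm_real, Real.norm_of_nonneg (Real.sqrt_nonneg t), ← pow_mul,
    mul_comm, pow_mul, inv_pow, Real.sq_sqrt ht]

theorem stmt_4_general (p m k n : ℕ)
    (F : Type) [Field F] [Fintype F] [DecidableEq F]
    (tr : F → ZMod p)
    (ω : ℂ) (hω : ω = Complex.exp (2 * Real.pi * Complex.I / p))
    (G : Matrix (Fin k) (Fin n) F)
    (A : Finset (Fin n))
    (hB : (G.submatrix id (fun j : ↥(Aᶜ) => (j : Fin n))).rank = k)
    (c : (Fin k → F) → ℂ)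
    (hc : ∑ x : Fin k → F, ‖c x‖ ^ 2 = 1)
    (a : A → F)
    (Φ : (↥(Aᶜ) → F) → ℂ)
    (hΦ : ∀ w : ↥(Aᶜ) → F,
      Φ w = ((Real.sqrt ((p : ℝ) ^ m) : ℂ))⁻¹ ^ A.card *
        ∑ x ∈ Finset.univ.filter (fun x : Fin k → F =>
            Matrix.vecMul x (G.submatrix id (fun j : ↥(Aᶜ) => (j : Fin n))) = w),
          c x * ω ^ (-((tr (∑ j : A,
            Matrix.vecMul x (G.submatrix id (fun j' : A => (j' : Fin n))) j * a j)).val : ℤ))) :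
    ∑ w : ↥(Aᶜ) → F, ‖Φ w‖ ^ 2 = (((p : ℝ) ^ m)⁻¹) ^ A.card := by
  have hinj := Matrix.vecMul_injective_of_rank_eq_card (hB.trans (Fintype.card_fin k).symm)
  have hω_norm : ‖ω‖ = 1 := hω ▸ Complex.norm_exp_two_pi_I_div p
  simp_rw [hΦ, norm_mul, mul_pow, norm_inv_sqrt_pow_sq (by positivity : (0 : ℝ) ≤ (p : ℝ) ^ m),
    ← mul_sum]
  rw [sum_norm_sq_sum_fiber_of_injective hinj]
  simp only [norm_mul, norm_zpow, hω_norm, one_zpow, mul_one, hc]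

/-- With `rank G = rank G_B = k` and normalized amplitudes `c`, the
unnormalized post-measurement amplitude function
`Φ_a(w) = q^{-|A|/2} ∑_{x·G_B = w} c(x) ω^{-tr((x·G_A)·aᵀ)}` satisfies
`∑_w |Φ_a(w)|² = q^{-|A|}`: every Fourier measurement outcome `a` of the subset `A`
occurs with probability `1/q^{|A|}`, independent of `a` and of `c`. -/
theorem stmt_4 (p m k n : ℕ) [Fact p.Prime] (hm : m ≠ 0)
    (F : Type) [Field F] [Fintype F] [DecidableEq F] [Algebra (ZMod p) F]
    (hcard : Fintype.card F = p ^ m)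
    (tr : F → ZMod p)
    (htr : ∀ x : F, algebraMap (ZMod p) F (tr x) = ∑ i ∈ Finset.range m, x ^ p ^ i)
    (ω : ℂ) (hω : ω = Complex.exp (2 * Real.pi * Complex.I / p))
    (G : Matrix (Fin k) (Fin n) F) (hG : G.rank = k)
    (A : Finset (Fin n))
    (hB : (G.submatrix id (fun j : ↥(Aᶜ) => (j : Fin n))).rank = k)
    (c : (Fin k → F) → ℂ)
    (hc : ∑ x : Fin k → F, ‖c x‖ ^ 2 = 1)
    (a : A → F)
    (Φ : (↥(Aᶜ) → F) → ℂ)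
    (hΦ : ∀ w : ↥(Aᶜ) → F,
      Φ w = ((Real.sqrt ((p : ℝ) ^ m) : ℂ))⁻¹ ^ A.card *
        ∑ x ∈ Finset.univ.filter (fun x : Fin k → F =>
            Matrix.vecMul x (G.submatrix id (fun j : ↥(Aᶜ) => (j : Fin n))) = w),
          c x * ω ^ (-((tr (∑ j : A,
            Matrix.vecMul x (G.submatrix id (fun j' : A => (j' : Fin n))) j * a j)).val : ℤ))) :
    ∑ w : ↥(Aᶜ) → F, ‖Φ w‖ ^ 2 = (((p : ℝ) ^ m)⁻¹) ^ A.card :=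
  stmt_4_general p m k n F tr ω hω G A hB c hc a Φ hΦ
end

section
/- Let q = p^m with p prime, ω = exp(2πi/p), and tr : F_q → F_p the field trace. Let G be a k×n matrix over F_q, A ⊆ {1,…,n} with complement B, with rank(G_B) = k. Let c : F_q^k → ℂ, let a ∈ F_q^{|A|}, and define Φ_a : F_q^{|B|} → ℂ by Φ_a(w) = q^{-|A|/2} Σ_{x ∈ F_q^k, x·G_B = w} c(x) ω^{-tr((x·G_A)·a^T)}. If z ∈ F_q^{|B|} satisfies G_B·z^T = G_A·a^T, then for every x ∈ F_q^k, ω^{tr((x·G_B)·z^T)} · Φ_a(x·G_B) = q^{-|A|/2} c(x); that is, applying the phase correction Z^z followed by the isometry |x·G_B⟩ ↦ |x⟩ recovers the original secret amplitudes exactly (up to the overall normalization q^{-|A|/2}). -/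
/-!
Since `G_B` has full row rank, `x ↦ x·G_B` is injective, so the sum defining `Φ_a(x·G_B)`
has the single term `x`. Its measurement phase is `ω^{-tr((x·G_A)·aᵀ)}`, and
`(x·G_B)·zᵀ = x·(G_B·zᵀ) = x·(G_A·aᵀ) = (x·G_A)·aᵀ`, so the correction `Z^z` cancels it exactly.
-/

namespace Matrix

variable {m n R : Type*}

theorem vecMul_injective_of_rank_eq_card_s6 [Field R] [Fintype m] [Fintype n] {M : Matrix m n R}
    (h : M.rank = Fintype.card m) : Function.Injective M.vecMul := by
  rw [vecMul_injective_iff, linearIndependent_iff_card_eq_finrank_span, Set.finrank,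
    ← rank_eq_finrank_span_row, h]

theorem vecMul_dotProduct_eq_of_mulVec_eq {l : Type*} [Fintype m] [Fintype n] [Fintype l]
    [NonUnitalSemiring R] {M : Matrix m n R} {N : Matrix m l R} {z : n → R} {a : l → R}
    (h : M *ᵥ z = N *ᵥ a) (x : m → R) : x ᵥ* M ⬝ᵥ z = x ᵥ* N ⬝ᵥ a := by
  rw [← dotProduct_mulVec, h, dotProduct_mulVec]

end Matrix

theorem Finset.filter_apply_eq_apply_of_injective {α β : Type*} [Fintype α] [DecidableEq β]
    {f : α → β} (hf : Function.Injective f) (x : α) :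
    univ.filter (fun y => f y = f x) = {x} := by
  ext y
  simp [hf.eq_iff]

theorem stmt_6_general (p m k n : ℕ)
    (F : Type) [Field F] [Fintype F] [DecidableEq F]
    (tr : F → ZMod p)
    (ω : ℂ) (hω : ω = Complex.exp (2 * Real.pi * Complex.I / p))
    (G : Matrix (Fin k) (Fin n) F)
    (A : Finset (Fin n))
    (hB : (G.submatrix id (fun j : ↥(Aᶜ) => (j : Fin n))).rank = k)
    (c : (Fin k → F) → ℂ)
    (a : A → F)
    (Φ : (↥(Aᶜ) → F) → ℂ)
    (hΦ : ∀ w : ↥(Aᶜ) → F,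
      Φ w = ((Real.sqrt ((p : ℝ) ^ m) : ℂ))⁻¹ ^ A.card *
        ∑ x ∈ Finset.univ.filter (fun x : Fin k → F =>
            Matrix.vecMul x (G.submatrix id (fun j : ↥(Aᶜ) => (j : Fin n))) = w),
          c x * ω ^ (-((tr (∑ j : A,
            Matrix.vecMul x (G.submatrix id (fun j' : A => (j' : Fin n))) j * a j)).val : ℤ)))
    (z : ↥(Aᶜ) → F)
    (hz : (G.submatrix id (fun j : ↥(Aᶜ) => (j : Fin n))).mulVec z =
      (G.submatrix id (fun j : A => (j : Fin n))).mulVec a) :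
    ∀ x : Fin k → F,
      ω ^ (tr (∑ j : ↥(Aᶜ),
          Matrix.vecMul x (G.submatrix id (fun j' : ↥(Aᶜ) => (j' : Fin n))) j * z j)).val *
        Φ (Matrix.vecMul x (G.submatrix id (fun j : ↥(Aᶜ) => (j : Fin n)))) =
      ((Real.sqrt ((p : ℝ) ^ m) : ℂ))⁻¹ ^ A.card * c x := by
  intro x
  have hinj := Matrix.vecMul_injective_of_rank_eq_card_s6 (m := Fin k)
    (hB.trans (Fintype.card_fin k).symm)
  have hphase := Matrix.vecMul_dotProduct_eq_of_mulVec_eq hz x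
  have hω0 : ω ≠ 0 := hω ▸ Complex.exp_ne_zero _
  rw [hΦ, Finset.filter_apply_eq_apply_of_injective hinj, Finset.sum_singleton]
  unfold dotProduct at hphase
  rw [hphase, zpow_neg, zpow_natCast]
  field_simp

/-- If `rank G_B = k` and `z` solves `G_B · zᵀ = G_A · aᵀ`, then applying
the phase correction `Z^z` followed by the isometry `|x·G_B⟩ ↦ |x⟩` to the
post-measurement amplitudes `Φ_a` recovers the secret amplitudes: for every `x`,
`ω^{tr((x·G_B)·zᵀ)} · Φ_a(x·G_B) = q^{-|A|/2} c(x)`. -/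
theorem stmt_6 (p m k n : ℕ) [Fact p.Prime] (hm : m ≠ 0)
    (F : Type) [Field F] [Fintype F] [DecidableEq F] [Algebra (ZMod p) F]
    (hcard : Fintype.card F = p ^ m)
    (tr : F → ZMod p)
    (htr : ∀ x : F, algebraMap (ZMod p) F (tr x) = ∑ i ∈ Finset.range m, x ^ p ^ i)
    (ω : ℂ) (hω : ω = Complex.exp (2 * Real.pi * Complex.I / p))
    (G : Matrix (Fin k) (Fin n) F)
    (A : Finset (Fin n))
    (hB : (G.submatrix id (fun j : ↥(Aᶜ) => (j : Fin n))).rank = k)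
    (c : (Fin k → F) → ℂ)
    (a : A → F)
    (Φ : (↥(Aᶜ) → F) → ℂ)
    (hΦ : ∀ w : ↥(Aᶜ) → F,
      Φ w = ((Real.sqrt ((p : ℝ) ^ m) : ℂ))⁻¹ ^ A.card *
        ∑ x ∈ Finset.univ.filter (fun x : Fin k → F =>
            Matrix.vecMul x (G.submatrix id (fun j : ↥(Aᶜ) => (j : Fin n))) = w),
          c x * ω ^ (-((tr (∑ j : A,
            Matrix.vecMul x (G.submatrix id (fun j' : A => (j' : Fin n))) j * a j)).val : ℤ)))
    (z : ↥(Aᶜ) → F)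
    (hz : (G.submatrix id (fun j : ↥(Aᶜ) => (j : Fin n))).mulVec z =
      (G.submatrix id (fun j : A => (j : Fin n))).mulVec a) :
    ∀ x : Fin k → F,
      ω ^ (tr (∑ j : ↥(Aᶜ),
          Matrix.vecMul x (G.submatrix id (fun j' : ↥(Aᶜ) => (j' : Fin n))) j * z j)).val *
        Φ (Matrix.vecMul x (G.submatrix id (fun j : ↥(Aᶜ) => (j : Fin n)))) =
      ((Real.sqrt ((p : ℝ) ^ m) : ℂ))⁻¹ ^ A.card * c x :=
  stmt_6_general p m k n F tr ω hω G A hB c a Φ hΦ z hz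
end
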